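/- Assume relations (R1), (R2) and (R3) hold on ℝ². Then g₁ satisfies the perturbed KP-I equation: (1/√2)∂ₓ⁴g₁ − ((2√2−ε²)/(√2−ε²))∂ₓ²g₁ − 3∂ₓ((∂ₓg₁)²) − (2/(√2−ε²))∂_y²g₁ = ∂ₓΠ₁ + (2/(√2−ε²))·(g₁Π₁ − Π₃) + (ε²/(2−√2 ε²))·∂ₓg₁·∂ₓ(g₁²) − (ε²/(2√2−2ε²))·g₁²·∂ₓ(g₁²) − (√2 ε²/(√2−ε²))·g₁·∂ₓ²f₁ on all of ℝ². -/

import Mathlib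

noncomputable section
open Set

namespace Stmt3

def pdx (f : ℝ → ℝ → ℝ) : ℝ → ℝ → ℝ := fun x y => deriv (fun t => f t y) x
def pdy (f : ℝ → ℝ → ℝ) : ℝ → ℝ → ℝ := fun x y => deriv (fun t => f x t) y
def Smooth2 (f : ℝ → ℝ → ℝ) : Prop := ContDiff ℝ (⊤ : ℕ∞) (Function.uncurry f)

lemma contDiff_slice {f : ℝ → ℝ → ℝ} (hf : Smooth2 f) (y : ℝ) :
    ContDiff ℝ (⊤ : ℕ∞) (fun t => f t y) :=
  hf.comp (contDiff_id.prodMk contDiff_const)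

lemma hasDerivAt_slice {f : ℝ → ℝ → ℝ} (hf : Smooth2 f) (x y : ℝ) :
    HasDerivAt (fun t => f t y) (pdx f x y) x :=
  ((contDiff_slice hf y).differentiable (by simp) x).hasDerivAt

lemma pdx_fderiv {f : ℝ → ℝ → ℝ} (hf : Smooth2 f) (x y : ℝ) :
    pdx f x y = fderiv ℝ (Function.uncurry f) (x, y) ((1 : ℝ), (0 : ℝ)) := by
  have h1 : HasDerivAt (fun t : ℝ => ((t, y) : ℝ × ℝ)) ((1 : ℝ), (0 : ℝ)) x :=
    (hasDerivAt_id x).prodMk (hasDerivAt_const x y)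
  have h2 : HasFDerivAt (Function.uncurry f) (fderiv ℝ (Function.uncurry f) (x, y)) (x, y) :=
    (hf.differentiable (by simp) (x, y)).hasFDerivAt
  have h3 : HasDerivAt (fun t => f t y)
      (fderiv ℝ (Function.uncurry f) (x, y) ((1 : ℝ), (0 : ℝ))) x :=
    by have := h2.comp_hasDerivAt x h1; exact this
  exact h3.deriv

lemma smooth_pdx {f : ℝ → ℝ → ℝ} (hf : Smooth2 f) : Smooth2 (pdx f) := by
  have h : Function.uncurry (pdx f)
      = fun p : ℝ × ℝ => fderiv ℝ (Function.uncurry f) p ((1 : ℝ), (0 : ℝ)) := by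
    funext p
    exact pdx_fderiv hf p.1 p.2
  unfold Smooth2
  rw [h]
  exact (hf.fderiv_right (by simp)).clm_apply contDiff_const

/-- Π₁ = −ε²∂_y²f₁ − ε⁴∂_y²f₂ − ε²∂ₓ²f₂ + 6ε²f₁f₂ + ε²(f₁+ε²f₂)³ + 3ε⁴f₂² + ε²f₂g₁² -/
def Pi1 (ε : ℝ) (f1 f2 g1 : ℝ → ℝ → ℝ) : ℝ → ℝ → ℝ := fun x y =>
  -ε^2 * pdy (pdy f1) x y - ε^4 * pdy (pdy f2) x y - ε^2 * pdx (pdx f2) x y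
    + 6*ε^2 * f1 x y * f2 x y + ε^2 * (f1 x y + ε^2 * f2 x y)^3
    + 3*ε^4 * (f2 x y)^2 + ε^2 * f2 x y * (g1 x y)^2

/-- Π₃ = 2ε²f₁f₂g₁ + ε⁴g₁f₂² -/
def Pi3 (ε : ℝ) (f1 f2 g1 : ℝ → ℝ → ℝ) : ℝ → ℝ → ℝ := fun x y =>
  2*ε^2 * f1 x y * f2 x y * g1 x y + ε^4 * g1 x y * (f2 x y)^2

theorem perturbed_KPI (ε : ℝ) (hε : ε ∈ Ioo (0:ℝ) ((2:ℝ) ^ ((1:ℝ)/4)))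
    (f1 f2 g1 : ℝ → ℝ → ℝ)
    (hf1 : Smooth2 f1) (hf2 : Smooth2 f2) (hg1 : Smooth2 g1)
    (hR1 : ∀ x y : ℝ, f1 x y = Real.sqrt 2 / 2 * pdx g1 x y - (g1 x y)^2 / 2)
    (hR2 : ∀ x y : ℝ, -pdx g1 x y =
      -pdx (pdx f1) x y + f1 x y * (2 * f1 x y + (g1 x y)^2)
        + 2 * f2 x y + (f1 x y)^2 + Pi1 ε f1 f2 g1 x y)
    (hR3 : ∀ x y : ℝ, -(Real.sqrt 2 - ε^2) * pdx f2 x y =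
      -pdx f1 x y - pdy (pdy g1) x y + g1 x y * (2 * f2 x y + (f1 x y)^2)
        + Pi3 ε f1 f2 g1 x y) :
    ∀ x y : ℝ,
      1 / Real.sqrt 2 * pdx (pdx (pdx (pdx g1))) x y
        - (2 * Real.sqrt 2 - ε^2) / (Real.sqrt 2 - ε^2) * pdx (pdx g1) x y
        - 3 * pdx (fun a b => (pdx g1 a b)^2) x y
        - 2 / (Real.sqrt 2 - ε^2) * pdy (pdy g1) x y =
      pdx (Pi1 ε f1 f2 g1) x y
        + 2 / (Real.sqrt 2 - ε^2)
          * (g1 x y * Pi1 ε f1 f2 g1 x y - Pi3 ε f1 f2 g1 x y)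
        + ε^2 / (2 - Real.sqrt 2 * ε^2)
          * pdx g1 x y * pdx (fun a b => (g1 a b)^2) x y
        - ε^2 / (2 * Real.sqrt 2 - 2 * ε^2)
          * (g1 x y)^2 * pdx (fun a b => (g1 a b)^2) x y
        - Real.sqrt 2 * ε^2 / (Real.sqrt 2 - ε^2) * g1 x y * pdx (pdx f1) x y := by
  intro x y
  -- HasDerivAt providers
  have Hg : ∀ t, HasDerivAt (fun u => g1 u y) (pdx g1 t y) t :=
    fun t => hasDerivAt_slice hg1 t y
  have Hg1 : ∀ t, HasDerivAt (fun u => pdx g1 u y) (pdx (pdx g1) t y) t :=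
    fun t => hasDerivAt_slice (smooth_pdx hg1) t y
  have Hg2 : ∀ t, HasDerivAt (fun u => pdx (pdx g1) u y) (pdx (pdx (pdx g1)) t y) t :=
    fun t => hasDerivAt_slice (smooth_pdx (smooth_pdx hg1)) t y
  have Hg3 : ∀ t, HasDerivAt (fun u => pdx (pdx (pdx g1)) u y)
      (pdx (pdx (pdx (pdx g1))) t y) t :=
    fun t => hasDerivAt_slice (smooth_pdx (smooth_pdx (smooth_pdx hg1))) t y
  have Hf1 : ∀ t, HasDerivAt (fun u => f1 u y) (pdx f1 t y) t :=
    fun t => hasDerivAt_slice hf1 t y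
  have Hf1x : ∀ t, HasDerivAt (fun u => pdx f1 u y) (pdx (pdx f1) t y) t :=
    fun t => hasDerivAt_slice (smooth_pdx hf1) t y
  have Hf1xx : ∀ t, HasDerivAt (fun u => pdx (pdx f1) u y) (pdx (pdx (pdx f1)) t y) t :=
    fun t => hasDerivAt_slice (smooth_pdx (smooth_pdx hf1)) t y
  have Hf2 : ∀ t, HasDerivAt (fun u => f2 u y) (pdx f2 t y) t :=
    fun t => hasDerivAt_slice hf2 t y
  -- derivative of R1
  have hR1x : ∀ t, pdx f1 t y
      = Real.sqrt 2 / 2 * pdx (pdx g1) t y - g1 t y * pdx g1 t y := by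
    intro t
    have hfun : (fun u => f1 u y)
        = (fun u => Real.sqrt 2 / 2 * pdx g1 u y - g1 u y * g1 u y / 2) := by
      funext u; linear_combination hR1 u y
    have hd0 := ((Hg1 t).const_mul (Real.sqrt 2 / 2)).sub (((Hg t).mul (Hg t)).div_const 2)
    have hd : HasDerivAt (fun u => Real.sqrt 2 / 2 * pdx g1 u y - g1 u y * g1 u y / 2)
        (Real.sqrt 2 / 2 * pdx (pdx g1) t y - g1 t y * pdx g1 t y) t := by
      exact hd0.congr_deriv (by ring)
    have hf := Hf1 t
    rw [hfun] at hf
    exact hf.unique hd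
  -- second derivative of R1
  have hR1xx : ∀ t, pdx (pdx f1) t y
      = Real.sqrt 2 / 2 * pdx (pdx (pdx g1)) t y
        - pdx g1 t y * pdx g1 t y - g1 t y * pdx (pdx g1) t y := by
    intro t
    have hfun : (fun u => pdx f1 u y)
        = (fun u => Real.sqrt 2 / 2 * pdx (pdx g1) u y - g1 u y * pdx g1 u y) := by
      funext u; linear_combination hR1x u
    have hd0 := ((Hg2 t).const_mul (Real.sqrt 2 / 2)).sub ((Hg t).mul (Hg1 t))
    have hd : HasDerivAt (fun u => Real.sqrt 2 / 2 * pdx (pdx g1) u y - g1 u y * pdx g1 u y)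
        (Real.sqrt 2 / 2 * pdx (pdx (pdx g1)) t y
          - pdx g1 t y * pdx g1 t y - g1 t y * pdx (pdx g1) t y) t := by
      exact hd0.congr_deriv (by ring)
    have hf := Hf1x t
    rw [hfun] at hf
    exact hf.unique hd
  -- third derivative of R1 (at x)
  have hR1xxx : pdx (pdx (pdx f1)) x y
      = Real.sqrt 2 / 2 * pdx (pdx (pdx (pdx g1))) x y
        - 3 * pdx g1 x y * pdx (pdx g1) x y - g1 x y * pdx (pdx (pdx g1)) x y := by
    have hfun : (fun u => pdx (pdx f1) u y)
        = (fun u => Real.sqrt 2 / 2 * pdx (pdx (pdx g1)) u y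
            - pdx g1 u y * pdx g1 u y - g1 u y * pdx (pdx g1) u y) := by
      funext u; linear_combination hR1xx u
    have hd0 := (((Hg3 x).const_mul (Real.sqrt 2 / 2)).sub ((Hg1 x).mul (Hg1 x))).sub
      ((Hg x).mul (Hg2 x))
    have hd : HasDerivAt (fun u => Real.sqrt 2 / 2 * pdx (pdx (pdx g1)) u y
          - pdx g1 u y * pdx g1 u y - g1 u y * pdx (pdx g1) u y)
        (Real.sqrt 2 / 2 * pdx (pdx (pdx (pdx g1))) x y
          - 3 * pdx g1 x y * pdx (pdx g1) x y - g1 x y * pdx (pdx (pdx g1)) x y) x := by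
      exact hd0.congr_deriv (by ring)
    have hf := Hf1xx x
    rw [hfun] at hf
    exact hf.unique hd
  -- derivative of Pi1 slice from R2
  have dPi1val : pdx (Pi1 ε f1 f2 g1) x y
      = -pdx (pdx g1) x y + pdx (pdx (pdx f1)) x y
        - (pdx f1 x y * (2 * f1 x y + g1 x y * g1 x y)
            + f1 x y * (2 * pdx f1 x y + (pdx g1 x y * g1 x y + g1 x y * pdx g1 x y)))
        - 2 * pdx f2 x y - (pdx f1 x y * f1 x y + f1 x y * pdx f1 x y) := by
    have hfun : (fun u => Pi1 ε f1 f2 g1 u y)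
        = (fun u => -pdx g1 u y + pdx (pdx f1) u y
            - f1 u y * (2 * f1 u y + g1 u y * g1 u y)
            - 2 * f2 u y - f1 u y * f1 u y) := by
      funext u; linear_combination -(hR2 u y)
    have hd0 := (((((Hg1 x).neg.add (Hf1xx x)).sub
        ((Hf1 x).mul (((Hf1 x).const_mul 2).add ((Hg x).mul (Hg x))))).sub
        ((Hf2 x).const_mul 2)).sub ((Hf1 x).mul (Hf1 x)))
    have hd : HasDerivAt (fun u => -pdx g1 u y + pdx (pdx f1) u y
          - f1 u y * (2 * f1 u y + g1 u y * g1 u y)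
          - 2 * f2 u y - f1 u y * f1 u y)
        (-pdx (pdx g1) x y + pdx (pdx (pdx f1)) x y
          - (pdx f1 x y * (2 * f1 x y + g1 x y * g1 x y)
              + f1 x y * (2 * pdx f1 x y + (pdx g1 x y * g1 x y + g1 x y * pdx g1 x y)))
          - 2 * pdx f2 x y - (pdx f1 x y * f1 x y + f1 x y * pdx f1 x y)) x := by
      exact hd0.congr_deriv rfl
    show deriv (fun u => Pi1 ε f1 f2 g1 u y) x = _
    rw [hfun]
    exact hd.deriv
  -- squares
  have hsq1 : pdx (fun a b => (pdx g1 a b)^2) x y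
      = 2 * pdx g1 x y * pdx (pdx g1) x y := by
    show deriv (fun t => (pdx g1 t y)^2) x = _
    have hfun : (fun t => (pdx g1 t y)^2) = fun t => pdx g1 t y * pdx g1 t y := by
      funext t; ring
    rw [hfun]
    exact ((Hg1 x).mul (Hg1 x)).deriv.trans (by ring)
  have hsq2 : pdx (fun a b => (g1 a b)^2) x y = 2 * g1 x y * pdx g1 x y := by
    show deriv (fun t => (g1 t y)^2) x = _
    have hfun : (fun t => (g1 t y)^2) = fun t => g1 t y * g1 t y := by
      funext t; ring
    rw [hfun]
    exact ((Hg x).mul (Hg x)).deriv.trans (by ring)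
  -- positivity facts
  have hs2 : Real.sqrt 2 ^ 2 = 2 := Real.sq_sqrt (by norm_num)
  have hspos : (0:ℝ) < Real.sqrt 2 := Real.sqrt_pos.mpr (by norm_num)
  have heps : ε ^ 2 < Real.sqrt 2 := by
    have h1 : ε ^ 2 < ((2:ℝ) ^ ((1:ℝ)/4)) ^ 2 := by
      have h0 := hε.1
      have h2 := hε.2
      nlinarith
    have h2 : ((2:ℝ) ^ ((1:ℝ)/4)) ^ (2:ℕ) = Real.sqrt 2 := by
      rw [← Real.rpow_natCast ((2:ℝ) ^ ((1:ℝ)/4)) 2,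
        ← Real.rpow_mul (by norm_num : (0:ℝ) ≤ 2)]
      rw [Real.sqrt_eq_rpow]
      norm_num
    linarith [h1, h2.le, h2.ge]
  have hD : Real.sqrt 2 - ε ^ 2 ≠ 0 := by nlinarith
  have hE : 2 - Real.sqrt 2 * ε ^ 2 ≠ 0 := by nlinarith
  have hG : 2 * Real.sqrt 2 - 2 * ε ^ 2 ≠ 0 := by nlinarith
  have hS : Real.sqrt 2 ≠ 0 := ne_of_gt hspos
  rw [dPi1val, hsq1, hsq2]
  have hf2v : f2 x y = (-pdx g1 x y + pdx (pdx f1) x y - f1 x y * (2 * f1 x y + (g1 x y)^2)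
      - (f1 x y)^2 - Pi1 ε f1 f2 g1 x y) / 2 := by
    linear_combination (-1/2 : ℝ) * hR2 x y
  have hF2x : pdx f2 x y = (pdx f1 x y + pdy (pdy g1) x y - g1 x y * (2 * f2 x y + (f1 x y)^2)
      - Pi3 ε f1 f2 g1 x y) / (Real.sqrt 2 - ε^2) := by
    rw [eq_div_iff hD]; linear_combination -(hR3 x y)
  rw [hF2x, hf2v, hR1xxx, hR1xx x, hR1x x, hR1 x y]
  have e1 : ε^2 / (2 - Real.sqrt 2 * ε^2) = Real.sqrt 2 * ε^2 / (2 * (Real.sqrt 2 - ε^2)) := by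
    rw [div_eq_div_iff hE (mul_ne_zero two_ne_zero hD)]; linear_combination ε^4 * hs2
  have e2 : 1 / Real.sqrt 2 = Real.sqrt 2 / 2 := by
    rw [div_eq_div_iff hS two_ne_zero]; linear_combination -hs2
  have e3 : 2 * Real.sqrt 2 - 2 * ε^2 = 2 * (Real.sqrt 2 - ε^2) := by ring
  have hs3 : Real.sqrt 2 ^ 3 = 2 * Real.sqrt 2 := by linear_combination Real.sqrt 2 * hs2
  rw [e1, e2, e3]
  field_simp
  ring_nf
  simp only [hs2, hs3]
  ring_nf

end Stmt3
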